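/- Let D ⊂ ℂ^n be bounded, strongly ℂ-linearly convex and of class C^{1,1}. For ζ ∈ bD and small ε > 0, let z_ε = ζ + εν_ζ where ν_ζ is the inner unit normal at ζ. Then |Δ(w,ζ)| + ε ≈ |Δ(w, z_ε)| uniformly for all ζ, w ∈ bD and all sufficiently small ε, where Δ(w,z) = ⟨∂ρ(w), w−z⟩. -/

import Mathlib

/-- The Leray pairing `Δ(w,z) = ⟨∂ρ(w), w−z⟩`. -/
noncomputable def cplxPair {n : ℕ}
    (pc : EuclideanSpace ℂ (Fin n) → EuclideanSpace ℂ (Fin n))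
    (w z : EuclideanSpace ℂ (Fin n)) : ℂ :=
  ∑ j, pc w j * (w j - z j)

/-!
Put `z_ε = ζ + εν_ζ` and `q = ⟨∂ρ(w), ν_ζ⟩`, so that `Δ(w, z_ε) = Δ(w, ζ) - εq`; since `|q|` is
bounded on `bD`, the upper bound is immediate, and so is the lower bound when `|Δ(w, ζ)| ≳ ε`.
Otherwise there are two cases. If `|w - ζ|² ≲ ε`, then `Re q ≈ Re ⟨∂ρ(ζ), ν_ζ⟩ = -|∇ρ(ζ)|/2` and,
by the `C^{1,1}` Taylor estimate, `Re Δ(w, ζ) ≳ -|w - ζ|²`, whence `Re Δ(w, z_ε) ≳ ε`.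
If `|w - ζ|² ≳ ε`, then `z_ε ∈ D̄` (Taylor again) lies at distance `≳ |w - ζ|` from `w`, and
strong ℂ-linear convexity gives `|Δ(w, z_ε)| ≳ |w - ζ|² ≳ ε`. Compactness of `bD` makes all
constants uniform.
-/

open Metric

section NormedSpace

variable {E F : Type*} [NormedAddCommGroup E] [NormedSpace ℝ E]
  [NormedAddCommGroup F] [NormedSpace ℝ F]

theorem norm_sub_sub_fderiv_le_of_lipschitzWith {f : E → F} (hf : Differentiable ℝ f)
    {K : NNReal} (hK : LipschitzWith K (fderiv ℝ f)) (x v : E) :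
    ‖f (x + v) - f x - fderiv ℝ f x v‖ ≤ K * ‖v‖ ^ 2 := by
  have hbound : ∀ y ∈ closedBall x ‖v‖, ‖fderiv ℝ f y - fderiv ℝ f x‖ ≤ K * ‖v‖ :=
    fun y hy => by
      rw [← dist_eq_norm]
      exact (hK.dist_le_mul y x).trans (by gcongr; exact hy)
  have := (convex_closedBall x ‖v‖).norm_image_sub_le_of_norm_fderiv_le' (fun y _ => hf y)
    hbound (mem_closedBall_self (norm_nonneg v)) (y := x + v) (by simp)
  simpa [sq, mul_assoc] using this

theorem apply_add_smul_nonpos {f : E → ℝ} (hf : Differentiable ℝ f) {K : NNReal}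
    (hK : LipschitzWith K (fderiv ℝ f)) {x v : E} (hx : f x = 0) (hv : ‖v‖ = 1) {ε : ℝ}
    (hε : 0 ≤ ε) (hsmall : K * ε ≤ -fderiv ℝ f x v) : f (x + ε • v) ≤ 0 := by
  have h := norm_sub_sub_fderiv_le_of_lipschitzWith hf hK x (ε • v)
  rw [Real.norm_eq_abs, norm_smul, hv, Real.norm_of_nonneg hε, map_smul, smul_eq_mul, hx] at h
  nlinarith [le_abs_self (f (x + ε • v) - 0 - ε * fderiv ℝ f x v)]

theorem mem_closure_setOf_neg_of_fderiv_ne_zero {f : E → ℝ} {x : E} (hx : f x = 0)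
    (hf : fderiv ℝ f x ≠ 0) : x ∈ closure {y | f y < 0} := by
  by_contra hcl
  refine hf (IsLocalMin.fderiv_eq_zero ?_)
  filter_upwards [isClosed_closure.isOpen_compl.mem_nhds hcl] with y hy
  rw [hx]
  exact not_lt.1 fun h => hy (subset_closure h)

theorem isCompact_setOf_eq_zero [ProperSpace E] {f : E → ℝ} (hf : Continuous f)
    (hbdd : Bornology.IsBounded {y | f y < 0}) (hgrad : ∀ x, f x = 0 → fderiv ℝ f x ≠ 0) :
    IsCompact {x | f x = 0} :=
  isCompact_of_isClosed_isBounded (isClosed_eq hf continuous_const)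
    (hbdd.closure.subset fun x hx => mem_closure_setOf_neg_of_fderiv_ne_zero hx (hgrad x hx))

theorem half_norm_sub_le_norm_sub_add_smul {w ζ v : E} (hv : ‖v‖ = 1) {ε : ℝ} (hε : 0 ≤ ε)
    (h2ε : 2 * ε ≤ ‖w - ζ‖) : ‖w - ζ‖ / 2 ≤ ‖w - (ζ + ε • v)‖ := by
  have := norm_sub_norm_le (w - ζ) (ε • v)
  rw [norm_smul, hv, Real.norm_of_nonneg hε, ← sub_add_eq_sub_sub] at this
  linarith

end NormedSpace

theorem fderiv_apply_normal_eq {E : Type*} [NormedAddCommGroup E] [InnerProductSpace ℂ E]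
    {f : E → ℝ} {x ν : E} (hν1 : ‖ν‖ = 1)
    (hν : ∀ v, fderiv ℝ f x v = -‖fderiv ℝ f x‖ * (inner ℂ ν v : ℂ).re) :
    fderiv ℝ f x ν = -‖fderiv ℝ f x‖ := by
  rw [hν, inner_self_eq_norm_sq_to_K, hν1]
  simp

section Pairing

variable {n : ℕ}

theorem norm_sum_mul_le (a b : EuclideanSpace ℂ (Fin n)) :
    ‖∑ j, a j * b j‖ ≤ ‖a‖ * ‖b‖ :=
  calc ‖∑ j, a j * b j‖ ≤ ∑ j, ‖a j‖ * ‖b j‖ := by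
        simpa only [norm_mul] using norm_sum_le Finset.univ fun j => a j * b j
    _ ≤ √(∑ j, ‖a j‖ ^ 2) * √(∑ j, ‖b j‖ ^ 2) := Real.sum_mul_le_sqrt_mul_sqrt _ _ _
    _ = ‖a‖ * ‖b‖ := by rw [EuclideanSpace.norm_eq, EuclideanSpace.norm_eq]

theorem sum_sub_mul (a b v : EuclideanSpace ℂ (Fin n)) :
    ∑ j, a j * v j - ∑ j, b j * v j = ∑ j, (a - b) j * v j := by
  simp only [← Finset.sum_sub_distrib, PiLp.sub_apply, sub_mul]

theorem cplxPair_add_smul (pc : EuclideanSpace ℂ (Fin n) → EuclideanSpace ℂ (Fin n))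
    (w ζ v : EuclideanSpace ℂ (Fin n)) (ε : ℝ) :
    cplxPair pc w (ζ + ε • v) = cplxPair pc w ζ - ε * ∑ j, pc w j * v j := by
  simp only [cplxPair, Finset.mul_sum, ← Finset.sum_sub_distrib, PiLp.add_apply,
    PiLp.smul_apply, Complex.real_smul]
  exact Finset.sum_congr rfl fun j _ => by ring

variable {ρ : EuclideanSpace ℂ (Fin n) → ℝ}
  {pc : EuclideanSpace ℂ (Fin n) → EuclideanSpace ℂ (Fin n)}
  (hpc : ∀ w v, fderiv ℝ ρ w v = 2 * (∑ j, pc w j * v j).re)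
include hpc

theorem norm_fderiv_sub_le (x y : EuclideanSpace ℂ (Fin n)) :
    ‖fderiv ℝ ρ x - fderiv ℝ ρ y‖ ≤ 2 * ‖pc x - pc y‖ := by
  refine ContinuousLinearMap.opNorm_le_bound _ (by positivity) fun v => ?_
  rw [sub_apply, hpc, hpc, ← mul_sub, ← Complex.sub_re, sum_sub_mul,
    Real.norm_eq_abs, abs_mul, abs_two, mul_assoc]
  gcongr
  exact (Complex.abs_re_le_norm _).trans (norm_sum_mul_le _ _)

theorem lipschitzWith_fderiv {K : NNReal} (hLip : LipschitzWith K pc) :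
    LipschitzWith (2 * K) (fderiv ℝ ρ) :=
  LipschitzWith.of_dist_le_mul fun x y =>
    calc dist (fderiv ℝ ρ x) (fderiv ℝ ρ y) ≤ 2 * dist (pc x) (pc y) := by
          simpa only [dist_eq_norm] using norm_fderiv_sub_le hpc x y
      _ ≤ 2 * (K * dist x y) := by gcongr; exact hLip.dist_le_mul x y
      _ = ↑(2 * K) * dist x y := by push_cast; ring

theorem neg_mul_sq_le_re_cplxPair (hρ : Differentiable ℝ ρ) {K : NNReal}
    (hLip : LipschitzWith K pc) {w ζ : EuclideanSpace ℂ (Fin n)} (hw : ρ w = 0)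
    (hζ : ρ ζ = 0) : -(K * ‖w - ζ‖ ^ 2) ≤ (cplxPair pc w ζ).re := by
  have h := norm_sub_sub_fderiv_le_of_lipschitzWith hρ (lipschitzWith_fderiv hpc hLip) w (ζ - w)
  have hpair : fderiv ℝ ρ w (ζ - w) = -(2 * (cplxPair pc w ζ).re) := by
    rw [hpc, cplxPair, ← mul_neg, ← Complex.neg_re, ← Finset.sum_neg_distrib]
    congr 2
    exact Finset.sum_congr rfl fun j _ => by simp only [PiLp.sub_apply]; ring
  rw [add_sub_cancel, hw, hζ, hpair, Real.norm_eq_abs, norm_sub_rev, NNReal.coe_mul,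
    NNReal.coe_two] at h
  nlinarith [neg_abs_le (0 - 0 - -(2 * (cplxPair pc w ζ).re))]

theorem re_sum_mul_normal_le {K : NNReal} (hLip : LipschitzWith K pc)
    {w ζ ν : EuclideanSpace ℂ (Fin n)} (hν1 : ‖ν‖ = 1)
    (hν : ∀ v, fderiv ℝ ρ ζ v = -‖fderiv ℝ ρ ζ‖ * (inner ℂ ν v : ℂ).re) :
    (∑ j, pc w j * ν j).re ≤ -(‖fderiv ℝ ρ ζ‖ / 2) + K * ‖w - ζ‖ := by
  have hζ : 2 * (∑ j, pc ζ j * ν j).re = -‖fderiv ℝ ρ ζ‖ := by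
    rw [← hpc, fderiv_apply_normal_eq hν1 hν]
  have hdiff : ‖∑ j, pc w j * ν j - ∑ j, pc ζ j * ν j‖ ≤ K * ‖w - ζ‖ := by
    rw [sum_sub_mul]
    calc _ ≤ ‖pc w - pc ζ‖ * ‖ν‖ := norm_sum_mul_le _ _
      _ ≤ K * ‖w - ζ‖ := by
        rw [hν1, mul_one, ← dist_eq_norm, ← dist_eq_norm]; exact hLip.dist_le_mul w ζ
  have := (Complex.re_le_norm _).trans hdiff
  rw [Complex.sub_re] at this
  linarith

end Pairing

section Estimates

variable {Δ q : ℂ} {ε : ℝ}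

theorem norm_sub_ofReal_mul_le_mul_norm_add {P : ℝ} (hε : 0 ≤ ε) (hP : 1 ≤ P) (hq : ‖q‖ ≤ P) :
    ‖Δ - ε * q‖ ≤ P * (‖Δ‖ + ε) :=
  calc ‖Δ - ε * q‖ ≤ ‖Δ‖ + ε * ‖q‖ := by
        simpa [norm_mul, Complex.norm_real, abs_of_nonneg hε] using norm_sub_le Δ (ε * q)
    _ ≤ P * (‖Δ‖ + ε) := by nlinarith [norm_nonneg Δ]

theorem mul_le_norm_sub_ofReal_mul {d K μ c : ℝ} (hK : 0 < K) (hμ : 0 < μ) (hc : 0 ≤ c)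
    (hε : 0 < ε) (hεμ : 16 * K * ε ≤ μ) (hd : 0 ≤ d) (hΔ : -(K * d ^ 2) ≤ Δ.re)
    (hq : q.re ≤ -μ + K * d) (hfar : 2 * ε ≤ d → c * d ^ 2 ≤ ‖Δ - ε * q‖) :
    min (μ / 2) (c * μ / (4 * K)) * ε ≤ ‖Δ - ε * q‖ := by
  by_cases hnear : K * d ^ 2 ≤ ε * μ / 4
  · have hKd : K * d ≤ μ / 4 := by nlinarith
    have hre : (Δ - ε * q).re = Δ.re - ε * q.re := by simp
    calc min (μ / 2) (c * μ / (4 * K)) * ε ≤ μ / 2 * ε := by gcongr; exact min_le_left _ _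
      _ ≤ (Δ - ε * q).re := by rw [hre]; nlinarith
      _ ≤ ‖Δ - ε * q‖ := Complex.re_le_norm _
  · rw [not_le] at hnear
    have hd2 : ε * μ / (4 * K) < d ^ 2 := by rw [div_lt_iff₀ (by positivity)]; linarith
    have h2ε : 2 * ε ≤ d := by
      have : K * (2 * ε) ^ 2 < K * d ^ 2 := by nlinarith
      nlinarith [lt_of_mul_lt_mul_left this hK.le]
    calc min (μ / 2) (c * μ / (4 * K)) * ε ≤ c * μ / (4 * K) * ε := by
          gcongr; exact min_le_right _ _
      _ = c * (ε * μ / (4 * K)) := by ring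
      _ ≤ c * d ^ 2 := by gcongr
      _ ≤ ‖Δ - ε * q‖ := hfar h2ε

theorem mul_norm_add_le_norm_sub_ofReal_mul {P m : ℝ} (hε : 0 ≤ ε) (hP : 1 ≤ P)
    (hq : ‖q‖ ≤ P) (hm : 0 ≤ m) (hmε : m * ε ≤ ‖Δ - ε * q‖) :
    min (1 / 3) (m / (2 * P + 1)) * (‖Δ‖ + ε) ≤ ‖Δ - ε * q‖ := by
  rcases le_or_gt (2 * P * ε) ‖Δ‖ with hbig | hsmall
  · have hrev : ‖Δ‖ - ε * ‖q‖ ≤ ‖Δ - ε * q‖ := by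
      simpa [norm_mul, Complex.norm_real, abs_of_nonneg hε] using norm_sub_norm_le Δ (ε * q)
    calc min (1 / 3) (m / (2 * P + 1)) * (‖Δ‖ + ε) ≤ 1 / 3 * (‖Δ‖ + ε) := by
          gcongr; exact min_le_left _ _
      _ ≤ ‖Δ‖ - ε * ‖q‖ := by nlinarith
      _ ≤ ‖Δ - ε * q‖ := hrev
  · calc min (1 / 3) (m / (2 * P + 1)) * (‖Δ‖ + ε) ≤ m / (2 * P + 1) * ((2 * P + 1) * ε) := by
          gcongr
          · exact min_le_right _ _
          · linarith
      _ = m * ε := by field_simp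
      _ ≤ ‖Δ - ε * q‖ := hmε

end Estimates

theorem delta_normal_displacement_general (n : ℕ)
    (ρ : EuclideanSpace ℂ (Fin n) → ℝ)
    (D : Set (EuclideanSpace ℂ (Fin n)))
    (hD : D = {z | ρ z < 0}) (hbdd : Bornology.IsBounded D)
    (hρ1 : ContDiff ℝ 1 ρ)
    (pc : EuclideanSpace ℂ (Fin n) → EuclideanSpace ℂ (Fin n))
    (hpc : ∀ w v, fderiv ℝ ρ w v = 2 * (∑ j, pc w j * v j).re)
    (Kpc : NNReal) (hpcLip : LipschitzWith Kpc pc)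
    (hgrad : ∀ w, ρ w = 0 → fderiv ℝ ρ w ≠ 0)
    (c₀ : ℝ) (hc₀ : 0 < c₀)
    (hconv : ∀ z, ρ z ≤ 0 → ∀ w, ρ w = 0 →
      c₀ * ‖w - z‖ ^ 2 ≤ ‖cplxPair pc w z‖)
    (ν : EuclideanSpace ℂ (Fin n) → EuclideanSpace ℂ (Fin n))
    (hνunit : ∀ ζ, ρ ζ = 0 → ‖ν ζ‖ = 1)
    (hν : ∀ ζ, ρ ζ = 0 → ∀ v, fderiv ℝ ρ ζ v =
      -‖fderiv ℝ ρ ζ‖ * (inner ℂ (ν ζ) v : ℂ).re) :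
    ∃ ε₀ C₁ C₂ : ℝ, 0 < ε₀ ∧ 0 < C₁ ∧ 0 < C₂ ∧
      ∀ ε : ℝ, 0 < ε → ε ≤ ε₀ → ∀ ζ w, ρ ζ = 0 → ρ w = 0 →
        C₁ * (‖cplxPair pc w ζ‖ + ε) ≤
            ‖cplxPair pc w (ζ + ε • ν ζ)‖ ∧
          ‖cplxPair pc w (ζ + ε • ν ζ)‖ ≤
            C₂ * (‖cplxPair pc w ζ‖ + ε) := by
  set K : NNReal := Kpc + 1
  have hK : (0 : ℝ) < K := by positivity
  have hLip : LipschitzWith K pc := hpcLip.weaken (by simp [K])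
  have hρ : Differentiable ℝ ρ := hρ1.differentiable one_ne_zero
  have hLipρ := lipschitzWith_fderiv hpc hLip
  have hS : IsCompact {z | ρ z = 0} :=
    isCompact_setOf_eq_zero hρ1.continuous (hD ▸ hbdd) hgrad
  obtain ⟨G, hG, hGle⟩ := hS.exists_forall_le' hLipρ.continuous.norm.continuousOn
    fun ζ hζ => norm_pos_iff.2 (hgrad ζ hζ)
  obtain ⟨P, hP⟩ := hS.exists_bound_of_continuousOn hLip.continuous.continuousOn
  obtain ⟨μ, hμ, rfl⟩ : ∃ μ, 0 < μ ∧ G = 2 * μ := ⟨G / 2, by positivity, by ring⟩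
  set m := min (μ / 2) (c₀ / 4 * μ / (4 * K))
  have hm : 0 < m := by positivity
  refine ⟨μ / (16 * K), min (1 / 3) (m / (2 * max P 1 + 1)), max P 1, by positivity,
    by positivity, by positivity, fun ε hε hεε₀ ζ w hζ hw => ?_⟩
  have hεμ : 16 * K * ε ≤ μ := by rwa [le_div_iff₀' (by positivity)] at hεε₀
  have hq : ‖∑ j, pc w j * ν ζ j‖ ≤ max P 1 := (norm_sum_mul_le _ _).trans <| by
    rw [hνunit ζ hζ, mul_one]; exact (hP w hw).trans (le_max_left _ _)
  have hre := re_sum_mul_normal_le hpc hLip (w := w) (hνunit ζ hζ) (hν ζ hζ)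
  have hzε : ρ (ζ + ε • ν ζ) ≤ 0 := apply_add_smul_nonpos hρ hLipρ hζ (hνunit ζ hζ) hε.le
    (by rw [fderiv_apply_normal_eq (hνunit ζ hζ) (hν ζ hζ)]; push_cast; linarith [hGle ζ hζ])
  have hfar : 2 * ε ≤ ‖w - ζ‖ → c₀ / 4 * ‖w - ζ‖ ^ 2 ≤ ‖cplxPair pc w (ζ + ε • ν ζ)‖ :=
    fun h2ε => calc c₀ / 4 * ‖w - ζ‖ ^ 2 = c₀ * (‖w - ζ‖ / 2) ^ 2 := by ring
      _ ≤ c₀ * ‖w - (ζ + ε • ν ζ)‖ ^ 2 := by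
        gcongr; exact half_norm_sub_le_norm_sub_add_smul (hνunit ζ hζ) hε.le h2ε
      _ ≤ _ := hconv _ hzε w hw
  rw [cplxPair_add_smul] at hfar ⊢
  have hmε : m * ε ≤ ‖cplxPair pc w ζ - ε * ∑ j, pc w j * ν ζ j‖ :=
    mul_le_norm_sub_ofReal_mul hK hμ (by positivity) hε hεμ (norm_nonneg _)
      (neg_mul_sq_le_re_cplxPair hpc hρ hLip hw hζ) (by linarith [hGle ζ hζ]) hfar
  exact ⟨mul_norm_add_le_norm_sub_ofReal_mul hε.le (le_max_right _ _) hq hm.le hmε,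
    norm_sub_ofReal_mul_le_mul_norm_add hε.le (le_max_right _ _) hq⟩

/-- For a bounded, strongly ℂ-linearly convex `C^{1,1}` domain, with `ν_ζ` the inner unit
normal at `ζ ∈ bD` and `z_ε = ζ + εν_ζ`, one has `|Δ(w,ζ)| + ε ≈ |Δ(w,z_ε)|` uniformly for
`ζ, w ∈ bD` and all sufficiently small `ε > 0`. -/
theorem delta_normal_displacement (n : ℕ) (hn : 2 ≤ n)
    (ρ : EuclideanSpace ℂ (Fin n) → ℝ)
    (D : Set (EuclideanSpace ℂ (Fin n)))
    (hD : D = {z | ρ z < 0}) (hbdd : Bornology.IsBounded D)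
    (hρ1 : ContDiff ℝ 1 ρ)
    (pc : EuclideanSpace ℂ (Fin n) → EuclideanSpace ℂ (Fin n))
    (hpc : ∀ w v, fderiv ℝ ρ w v = 2 * (∑ j, pc w j * v j).re)
    (Kpc : NNReal) (hpcLip : LipschitzWith Kpc pc)
    (hgrad : ∀ w, ρ w = 0 → fderiv ℝ ρ w ≠ 0)
    (c₀ : ℝ) (hc₀ : 0 < c₀)
    (hconv : ∀ z, ρ z ≤ 0 → ∀ w, ρ w = 0 →
      c₀ * ‖w - z‖ ^ 2 ≤ ‖cplxPair pc w z‖)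
    (ν : EuclideanSpace ℂ (Fin n) → EuclideanSpace ℂ (Fin n))
    (hνunit : ∀ ζ, ρ ζ = 0 → ‖ν ζ‖ = 1)
    (hν : ∀ ζ, ρ ζ = 0 → ∀ v, fderiv ℝ ρ ζ v =
      -‖fderiv ℝ ρ ζ‖ * (inner ℂ (ν ζ) v : ℂ).re) :
    ∃ ε₀ C₁ C₂ : ℝ, 0 < ε₀ ∧ 0 < C₁ ∧ 0 < C₂ ∧
      ∀ ε : ℝ, 0 < ε → ε ≤ ε₀ → ∀ ζ w, ρ ζ = 0 → ρ w = 0 →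
        C₁ * (‖cplxPair pc w ζ‖ + ε) ≤
            ‖cplxPair pc w (ζ + ε • ν ζ)‖ ∧
          ‖cplxPair pc w (ζ + ε • ν ζ)‖ ≤
            C₂ * (‖cplxPair pc w ζ‖ + ε) :=
  delta_normal_displacement_general n ρ D hD hbdd hρ1 pc hpc Kpc hpcLip hgrad c₀ hc₀ hconv ν hνunit
    hν
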